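/- Let w be a stable word of length at least 3 and p ∈ ℤ. Then f18(Σ̃(w,p)) ⊆ Σ̃(f18(w), p+1). If moreover w is not of the form 0^α (10)^n 1^β with α, β ∈ {0,1} and n ∈ ℕ, then f18(Σ̃(w,p)) = Σ̃(f18(w), p+1). -/

import Mathlib

open Filter MeasureTheory

/-- The local rule of ECA 18. -/
def rule18 (a b c : Bool) : Bool := (!a && !b && c) || (a && !b && !c)

/-- The local rule of ECA 90. -/
def rule90 (a _b c : Bool) : Bool := xor a c

/-- ECA 18 acting on configurations. -/
def f18C (x : ℤ → Bool) : ℤ → Bool := fun i => rule18 (x (i - 1)) (x i) (x (i + 1))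

/-- ECA 90 acting on configurations. -/
def f90C (x : ℤ → Bool) : ℤ → Bool := fun i => rule90 (x (i - 1)) (x i) (x (i + 1))

/-- Applying a radius-1 local rule to a finite word (shortens it by 2). -/
def mapWord (R : Bool → Bool → Bool → Bool) (w : List Bool) : List Bool :=
  (List.range (w.length - 2)).map fun i =>
    R (w.getD i false) (w.getD (i + 1) false) (w.getD (i + 2) false)

/-- ECA 18 acting on finite words. -/
def f18W : List Bool → List Bool := mapWord rule18

/-- ECA 90 acting on finite words. -/
def f90W : List Bool → List Bool := mapWord rule90

/-- The kink `1 0^(2k) 1`. -/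
def kinkWord (k : ℕ) : List Bool := true :: (List.replicate (2 * k) false ++ [true])

/-- A kink occurs in the word `w` at position `i`. -/
def kinkAtW (w : List Bool) (i : ℕ) : Prop :=
  ∃ k, (w.drop i).take (2 * k + 2) = kinkWord k

/-- The number of kinks in a finite word: the number of positions where a kink occurs. -/
noncomputable def kinkCount (w : List Bool) : ℕ := {i : ℕ | kinkAtW w i}.ncard

/-- A kink occurs in the configuration `x` at position `i`. -/
def kinkAtC (x : ℤ → Bool) (i : ℤ) : Prop :=
  ∃ k, ∀ j : ℕ, j < 2 * k + 2 → x (i + j) = (kinkWord k).getD j false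

/-- The configuration `x` contains exactly `m` kinks: the set of positions where a kink
occurs is finite of cardinality `m` (equivalently, `g_x(n)` tends to `m`). -/
def configKinks (x : ℤ → Bool) (m : ℕ) : Prop :=
  {i : ℤ | kinkAtC x i}.Finite ∧ {i : ℤ | kinkAtC x i}.ncard = m

/-- Left unstable words: the regular language `(ε+0)(10)^* 11 (0+1)^*`. -/
def leftUnstable (w : List Bool) : Prop :=
  ∃ z t : List Bool, ∃ n : ℕ, (z = [] ∨ z = [false]) ∧
    w = z ++ (List.replicate n [true, false]).flatten ++ [true, true] ++ t

/-- Right unstable words: the regular language `(0+1)^* 11 (01)^* (ε+0)`. -/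
def rightUnstable (w : List Bool) : Prop :=
  ∃ z s : List Bool, ∃ n : ℕ, (z = [] ∨ z = [false]) ∧
    w = s ++ [true, true] ++ (List.replicate n [false, true]).flatten ++ z

/-- Stable words: those that are neither left nor right unstable. -/
def stable (w : List Bool) : Prop := ¬ (leftUnstable w ∨ rightUnstable w)

/-- The finite extension `Σ(w)`: words `a ++ w ++ b` with the same number of kinks as `w`. -/
def extW (w : List Bool) : Set (List Bool) :=
  {u | (∃ a b : List Bool, u = a ++ w ++ b) ∧ kinkCount u = kinkCount w}

/-- The extension `Σ̃(w, p)`: configurations containing `w` at position `p`,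
with the same number of kinks as `w`. -/
def extC (w : List Bool) (p : ℤ) : Set (ℤ → Bool) :=
  {x | (∀ j : ℕ, j < w.length → x (p + j) = w.getD j false) ∧ configKinks x (kinkCount w)}

/-- The cylinder set `[w]_i`. -/
def cyl (w : List Bool) (i : ℤ) : Set (ℤ → Bool) :=
  {x | ∀ j : ℕ, j < w.length → x (i + j) = w.getD j false}

/-- Words of the exceptional form `0^α (10)^n 1^β` with `α, β ∈ {0,1}`. -/
def specialForm (w : List Bool) : Prop :=
  ∃ z₁ z₂ : List Bool, ∃ n : ℕ, (z₁ = [] ∨ z₁ = [false]) ∧ (z₂ = [] ∨ z₂ = [true]) ∧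
    w = z₁ ++ (List.replicate n [true, false]).flatten ++ z₂


/-!
A configuration has a kink exactly where two consecutive ones sit at odd distance, so a
configuration containing `w` at `p` lies in `Σ̃(w,p)` iff all such pairs lie inside the window
`[p, p + |w|)`.

Forward inclusion: let `y = f18 x` have a kink `(a, b)` reaching the last cell of the new window.
If `x (b+1) = 1`, the zeros of `y` between `a` and `b` force `x` to vanish there, so `x` has the
kink `(a-1, b+1)`, which leaves the old window. If `x (b+1) = 0`, the ones of `x` under the zeros
of `y` descend from `b-1` in steps of two until two adjacent ones appear; these form a kink of
`x`, hence lie in the window, and `w` ends in `11(01)*(ε+0)`, i.e. it is right unstable. The left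
end is the mirror image.

Reverse inclusion: outside the window we build a preimage vanishing on one parity class; on the
other class rule 18 reads `x (t+1) = x (t-1) xor y t`, which determines it. On the right the class
is fixed by the last one of `w`. Since `w` is neither right unstable nor alternating (i.e. not
`0^α (10)^n 1^β`), `f18 w` has a one of the same parity after which all its ones have that
parity; as `y` has no kinks beyond the window, all ones of `y` to the right have this parity too,
which is what the recursion needs. The left side is symmetric, and the preimage so built has no
kinks outside the window.
-/

/-! ### Rule 18 on words and configurations -/

theorem rule18_eq_true_iff (a b c : Bool) : rule18 a b c = true ↔ b = false ∧ a ≠ c := by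
  cases a <;> cases b <;> cases c <;> simp [rule18]

theorem rule18_false_middle (a c : Bool) : rule18 a false c = xor a c := by
  cases a <;> cases c <;> rfl

theorem rule18_comm (a b c : Bool) : rule18 a b c = rule18 c b a := by
  cases a <;> cases b <;> cases c <;> rfl

theorem f18C_apply (x : ℤ → Bool) (j : ℤ) :
    f18C x j = rule18 (x (j - 1)) (x j) (x (j + 1)) := rfl

theorem f18C_congr {x x' : ℤ → Bool} {j : ℤ}
    (h : ∀ t, j - 1 ≤ t → t ≤ j + 1 → x t = x' t) : f18C x j = f18C x' j := by
  rw [f18C_apply, f18C_apply, h (j - 1) le_rfl (by omega), h j (by omega) (by omega),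
    h (j + 1) (by omega) le_rfl]

theorem f18W_length (w : List Bool) : (f18W w).length = w.length - 2 := by
  simp [f18W, mapWord]

theorem f18W_getD {w : List Bool} {i : ℕ} (h : i + 2 < w.length) :
    (f18W w).getD i false =
      rule18 (w.getD i false) (w.getD (i + 1) false) (w.getD (i + 2) false) := by
  rw [List.getD_eq_getElem _ _ (by rw [f18W_length]; omega)]
  simp [f18W, mapWord]

theorem getD_f18W_eq_true {w : List Bool} {i : ℕ} (h : (f18W w).getD i false = true) :
    i + 2 < w.length ∧ w.getD (i + 1) false = false ∧
      w.getD i false ≠ w.getD (i + 2) false := by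
  by_cases hi : i + 2 < w.length
  · rw [f18W_getD hi, rule18_eq_true_iff] at h
    exact ⟨hi, h⟩
  · rw [List.getD_eq_default _ _ (by rw [f18W_length]; omega)] at h
    contradiction

theorem mem_cyl_apply {x : ℤ → Bool} {w : List Bool} {p t : ℤ} (hx : x ∈ cyl w p)
    (h₁ : p ≤ t) (h₂ : t < p + w.length) : x t = w.getD (t - p).toNat false := by
  rw [← hx _ (by omega)]
  congr 1
  omega

theorem f18C_mem_cyl {x : ℤ → Bool} {w : List Bool} {p : ℤ} (hx : x ∈ cyl w p) :
    f18C x ∈ cyl (f18W w) (p + 1) := by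
  intro j hj
  rw [f18W_length] at hj
  rw [f18W_getD (by omega), f18C_apply, ← hx j (by omega), ← hx (j + 1) (by omega),
    ← hx (j + 2) (by omega)]
  push_cast
  ring_nf

/-! ### Kinks -/

theorem kinkWord_length (k : ℕ) : (kinkWord k).length = 2 * k + 2 := by
  simp [kinkWord]

theorem kinkWord_getD (k j : ℕ) :
    (kinkWord k).getD j false = decide (j = 0 ∨ j = 2 * k + 1) := by
  rcases j with _ | j
  · simp [kinkWord]
  · rw [kinkWord, List.getD_cons_succ]
    rcases lt_trichotomy j (2 * k) with hj | rfl | hj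
    · rw [List.getD_append _ _ _ _ (by simpa using hj), decide_eq_false (by omega)]
      simp [hj]
    · simp
    · rw [List.getD_eq_default _ _ (by simpa using hj), decide_eq_false (by omega)]

theorem take_drop_eq_iff {w u : List Bool} {i n : ℕ} (hn : 0 < n) (hlen : u.length = n) :
    (w.drop i).take n = u ↔
      i + n ≤ w.length ∧ ∀ j < n, w.getD (i + j) false = u.getD j false := by
  constructor
  · rintro rfl
    simp only [List.length_take, List.length_drop] at hlen
    refine ⟨by omega, fun j hj => ?_⟩
    simp [List.getD_eq_getElem?_getD, hj]
  · rintro ⟨hle, h⟩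
    apply List.ext_getElem (by simp only [List.length_take, List.length_drop]; omega)
    intro j h₁ h₂
    have := h j (by omega)
    rw [List.getD_eq_getElem _ _ (by omega), List.getD_eq_getElem _ _ h₂] at this
    simpa using this

def IsKink (x : ℤ → Bool) (a b : ℤ) : Prop :=
  a < b ∧ (b - a) % 2 = 1 ∧ x a = true ∧ x b = true ∧ ∀ t, a < t → t < b → x t = false

def KinksIn (x : ℤ → Bool) (lo hi : ℤ) : Prop :=
  ∀ a b, IsKink x a b → lo ≤ a ∧ b < hi

theorem IsKink.right_unique {x : ℤ → Bool} {a b b' : ℤ} (h : IsKink x a b)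
    (h' : IsKink x a b') : b = b' := by
  obtain ⟨hab, -, -, hb, hgap⟩ := h
  obtain ⟨hab', -, -, hb', hgap'⟩ := h'
  by_contra hne
  rcases Ne.lt_or_gt hne with hlt | hlt
  · simp [hgap' b hab hlt] at hb
  · simp [hgap b' hab' hlt] at hb'

theorem IsKink.exists_eq {x : ℤ → Bool} {a b : ℤ} (h : IsKink x a b) :
    ∃ k : ℕ, b = a + (2 * k + 1 : ℕ) :=
  ⟨((b - a).toNat - 1) / 2, by have := h.1; have := h.2.1; omega⟩

theorem kinkWord_pattern_iff {x : ℤ → Bool} {a : ℤ} {k : ℕ} :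
    (∀ j : ℕ, j < 2 * k + 2 → x (a + j) = (kinkWord k).getD j false) ↔
      IsKink x a (a + (2 * k + 1 : ℕ)) := by
  simp only [kinkWord_getD]
  constructor
  · intro h
    refine ⟨by omega, by omega, by simpa using h 0 (by omega),
      by simpa using h (2 * k + 1) (by omega), fun t h₁ h₂ => ?_⟩
    have := h (t - a).toNat (by omega)
    rw [show a + ((t - a).toNat : ℤ) = t by omega] at this
    simp only [this, decide_eq_false_iff_not]
    omega
  · rintro ⟨-, -, ha, hb, hgap⟩ j hj
    by_cases hj₀ : j = 0
    · simpa [hj₀] using ha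
    by_cases hjk : j = 2 * k + 1
    · simpa [hjk] using hb
    rw [hgap _ (by omega) (by omega)]
    simp [hj₀, hjk]

theorem kinkAtC_iff {x : ℤ → Bool} {a : ℤ} : kinkAtC x a ↔ ∃ b, IsKink x a b := by
  constructor
  · rintro ⟨k, hk⟩
    exact ⟨_, kinkWord_pattern_iff.1 hk⟩
  · rintro ⟨b, hb⟩
    obtain ⟨k, rfl⟩ := hb.exists_eq
    exact ⟨k, kinkWord_pattern_iff.2 hb⟩

theorem kinkAtW_lt_length {w : List Bool} {i : ℕ} (h : kinkAtW w i) : i < w.length := by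
  obtain ⟨k, hk⟩ := h
  have := ((take_drop_eq_iff (by omega) (kinkWord_length k)).1 hk).1
  omega

theorem kinkAtW_finite (w : List Bool) : {i | kinkAtW w i}.Finite :=
  (Set.finite_lt_nat w.length).subset fun _ => kinkAtW_lt_length

theorem kinkAtW_iff {x : ℤ → Bool} {w : List Bool} {p : ℤ} (hx : x ∈ cyl w p) (i : ℕ) :
    kinkAtW w i ↔ ∃ b, IsKink x (p + i) b ∧ b < p + w.length := by
  have hshift : ∀ j : ℕ, i + j < w.length → x (p + i + j) = w.getD (i + j) false := by
    intro j hj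
    rw [← hx (i + j) hj]
    push_cast
    ring_nf
  constructor
  · rintro ⟨k, hk⟩
    obtain ⟨hle, hk⟩ := (take_drop_eq_iff (by omega) (kinkWord_length k)).1 hk
    refine ⟨p + i + (2 * k + 1 : ℕ), kinkWord_pattern_iff.1 fun j hj => ?_, by omega⟩
    rw [← hk j hj, hshift j (by omega)]
  · rintro ⟨b, hb, hbL⟩
    obtain ⟨k, rfl⟩ := hb.exists_eq
    refine ⟨k, (take_drop_eq_iff (by omega) (kinkWord_length k)).2
      ⟨by omega, fun j hj => ?_⟩⟩
    rw [← kinkWord_pattern_iff.2 hb j hj, hshift j (by omega)]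

theorem image_kinkAtW_subset {x : ℤ → Bool} {w : List Bool} {p : ℤ} (hx : x ∈ cyl w p) :
    (fun i : ℕ => p + i) '' {i | kinkAtW w i} ⊆ {a | kinkAtC x a} := by
  rintro _ ⟨i, hi, rfl⟩
  obtain ⟨b, hb, -⟩ := (kinkAtW_iff hx i).1 hi
  exact kinkAtC_iff.2 ⟨b, hb⟩

theorem ncard_image_kinkAtW (w : List Bool) (p : ℤ) :
    ((fun i : ℕ => p + i) '' {i | kinkAtW w i}).ncard = kinkCount w :=
  Set.ncard_image_of_injective _ fun i j h => by simpa using h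

theorem mem_extC_iff {x : ℤ → Bool} {w : List Bool} {p : ℤ} (hx : x ∈ cyl w p) :
    x ∈ extC w p ↔ KinksIn x p (p + w.length) := by
  constructor
  · rintro ⟨-, hfin, hcard⟩ a b hab
    have hset := Set.eq_of_subset_of_ncard_le (image_kinkAtW_subset hx)
      (by rw [hcard, ncard_image_kinkAtW]) hfin
    obtain ⟨i, hi, rfl⟩ : a ∈ (fun i : ℕ => p + i) '' {i | kinkAtW w i} :=
      hset ▸ kinkAtC_iff.2 ⟨b, hab⟩
    obtain ⟨b', hb', hb'L⟩ := (kinkAtW_iff hx i).1 hi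
    rw [hab.right_unique hb']
    exact ⟨by simp, hb'L⟩
  · intro h
    have hset : {a | kinkAtC x a} = (fun i : ℕ => p + i) '' {i | kinkAtW w i} := by
      refine Set.Subset.antisymm (fun a ha => ?_) (image_kinkAtW_subset hx)
      obtain ⟨b, hab⟩ := kinkAtC_iff.1 ha
      obtain ⟨hpa, hbL⟩ := h a b hab
      refine ⟨(a - p).toNat, (kinkAtW_iff hx _).2 ⟨b, ?_, hbL⟩, by simp only; omega⟩
      rwa [show p + ((a - p).toNat : ℤ) = a by omega]
    refine ⟨hx, ?_, ?_⟩
    · rw [hset]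
      exact (kinkAtW_finite w).image _
    · rw [hset, ncard_image_kinkAtW]

theorem exists_isKink_of_odd {x : ℤ → Bool} {u v : ℤ} (hu : x u = true) (hv : x v = true)
    (huv : u < v) (hpar : (v - u) % 2 = 1) : ∃ a b, u ≤ a ∧ b ≤ v ∧ IsKink x a b := by
  induction hd : (v - u).toNat using Nat.strong_induction_on generalizing u v with
  | _ d ih =>
  by_cases hmid : ∃ t, u < t ∧ t < v ∧ x t = true
  · obtain ⟨t, hut, htv, ht⟩ := hmid
    rcases Int.emod_two_eq_zero_or_one (t - u) with h | h
    · obtain ⟨a, b, ha, hb, hab⟩ := ih _ (by omega) ht hv htv (by omega) rfl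
      exact ⟨a, b, by omega, hb, hab⟩
    · obtain ⟨a, b, ha, hb, hab⟩ := ih _ (by omega) hu ht hut h rfl
      exact ⟨a, b, ha, by omega, hab⟩
  · push Not at hmid
    exact ⟨u, v, le_rfl, le_rfl, huv, hpar, hu, hv, fun t h h' => by simpa using hmid t h h'⟩

theorem exists_parity_of_forall_not_isKink {x : ℤ → Bool} (h : ∀ a b, ¬ IsKink x a b) :
    ∃ c, ∀ t, (t - c) % 2 = 0 → x t = false := by
  by_cases hone : ∃ t₀, x t₀ = true
  · obtain ⟨t₀, ht₀⟩ := hone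
    refine ⟨t₀ + 1, fun t ht => ?_⟩
    by_contra hxt
    rw [Bool.not_eq_false] at hxt
    rcases lt_trichotomy t₀ t with hlt | rfl | hlt
    · obtain ⟨a, b, -, -, hab⟩ := exists_isKink_of_odd ht₀ hxt hlt (by omega)
      exact h a b hab
    · omega
    · obtain ⟨a, b, -, -, hab⟩ := exists_isKink_of_odd hxt ht₀ hlt (by omega)
      exact h a b hab
  · push Not at hone
    exact ⟨0, fun t _ => by simpa using hone t⟩

theorem not_isKink_of_parity {x : ℤ → Bool} {c : ℤ}
    (h : ∀ t, (t - c) % 2 = 1 → x t = false) (a b : ℤ) : ¬ IsKink x a b := by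
  rintro ⟨-, hodd, ha, hb, -⟩
  rcases Int.emod_two_eq_zero_or_one (a - c) with hc | hc
  · simp [h b (by omega)] at hb
  · simp [h a hc] at ha

theorem ones_parity_of_kinks_lt {y : ℤ → Bool} {j₀ hi : ℤ} (h₀ : y j₀ = true)
    (hk : ∀ a b, IsKink y a b → b < hi)
    (hwin : ∀ j, j₀ ≤ j → j < hi → y j = true → (j - j₀) % 2 = 0) :
    ∀ j, j₀ ≤ j → y j = true → (j - j₀) % 2 = 0 := by
  intro j hj hy
  by_contra hpar
  obtain ⟨a, b, ha, hb, hab⟩ := exists_isKink_of_odd h₀ hy (by omega) (by omega)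
  have hbhi := hk a b hab
  have := hwin a ha (by have := hab.1; omega) hab.2.2.1
  have := hwin b (by have := hab.1; omega) hbhi hab.2.2.2.1
  have := hab.2.1
  omega

theorem IsKink.right_le {x : ℤ → Bool} {a b t₀ : ℤ} (hab : IsKink x a b)
    (ht₀ : x t₀ = true)
    (hpar : ∀ t, t₀ ≤ t → x t = true → (t - t₀) % 2 = 0) : b ≤ t₀ := by
  obtain ⟨hlt, hodd, ha, hb, hgap⟩ := hab
  by_contra! hb₀
  by_cases ha₀ : a < t₀
  · simp [hgap t₀ ha₀ hb₀] at ht₀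
  · have := hpar a (by omega) ha
    have := hpar b (by omega) hb
    omega

/-! ### Unstable and alternating words -/

theorem eq_flatten_replicate_of_getD (a b : Bool) :
    ∀ u : List Bool, (∀ s < u.length, u.getD s false = if s % 2 = 0 then a else b) →
      u = (List.replicate (u.length / 2) [a, b]).flatten ++
        (if u.length % 2 = 1 then [a] else [])
  | [], _ => rfl
  | [c], h => by simpa using h 0 (by simp)
  | c :: d :: u, h => by
    have hc : c = a := by simpa using h 0 (by simp)
    have hd : d = b := by simpa using h 1 (by simp)
    have ih := eq_flatten_replicate_of_getD a b u fun s hs => by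
      simpa [Nat.add_mod] using h (s + 2) (by simp only [List.length_cons]; omega)
    rw [List.length_cons, List.length_cons, show (u.length + 1 + 1) / 2 = u.length / 2 + 1 by omega,
      show (u.length + 1 + 1) % 2 = u.length % 2 by omega, List.replicate_succ]
    conv_lhs => rw [ih]
    simp [hc, hd]

theorem rightUnstable_of_getD {w : List Bool} {j : ℕ} (hj : j + 2 ≤ w.length)
    (h₀ : w.getD j false = true) (h₁ : w.getD (j + 1) false = true)
    (hpat : ∀ s, j + 2 ≤ s → s < w.length → (w.getD s false = true ↔ (s - j) % 2 = 1)) :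
    rightUnstable w := by
  set u := w.drop (j + 2)
  have hu := eq_flatten_replicate_of_getD false true u fun s hs => by
    have := hpat (j + 2 + s) (by omega) (by simp only [u, List.length_drop] at hs; omega)
    simp only [u, List.getD_eq_getElem?_getD, List.getElem?_drop] at this ⊢
    split_ifs with h
    · cases h' : w[j + 2 + s]?.getD false
      · rfl
      · rw [h'] at this
        have := this.1 rfl
        omega
    · exact this.2 (by omega)
  refine ⟨if u.length % 2 = 1 then [false] else [], w.take j, u.length / 2,
    by split_ifs <;> simp, ?_⟩
  rw [List.getD_eq_getElem _ _ (by omega)] at h₀ h₁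
  simp only [List.append_assoc]
  rw [← hu]
  conv_lhs => rw [← List.take_append_drop j w, List.drop_eq_getElem_cons (by omega),
    List.drop_eq_getElem_cons (by omega), h₀, h₁]
  simp [u]

def Alternating (w : List Bool) : Prop :=
  ∀ s, s + 1 < w.length → w.getD (s + 1) false = !w.getD s false

theorem specialForm_of_alternating {w : List Bool} (hw : Alternating w) : specialForm w := by
  have hpat : ∀ s < w.length,
      w.getD s false = if s % 2 = 0 then w.getD 0 false else !w.getD 0 false := by
    intro s hs
    induction s with
    | zero => simp
    | succ s ih =>
      rw [hw s hs, ih (by omega)]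
      split_ifs <;> first | omega | simp
  match w, hpat with
  | [], _ => exact ⟨[], [], 0, .inl rfl, .inl rfl, rfl⟩
  | true :: u, hpat =>
    refine ⟨[], _, _, .inl rfl, by split_ifs <;> simp,
      eq_flatten_replicate_of_getD true false _ fun s hs => ?_⟩
    simpa using hpat s hs
  | false :: u, hpat =>
    refine ⟨[false], _, _, .inr rfl, by split_ifs <;> simp,
      congrArg (false :: ·) (eq_flatten_replicate_of_getD true false u fun s hs => ?_)⟩
    have := hpat (s + 1) (by simp only [List.length_cons]; omega)
    simp only [List.getD_cons_succ, List.getD_cons_zero] at this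
    rw [this]
    split_ifs <;> first | rfl | omega

theorem rightUnstable_of_mem_cyl {x : ℤ → Bool} {w : List Bool} {p s : ℤ} (hx : x ∈ cyl w p)
    (hps : p ≤ s) (hsL : s + 1 < p + w.length) (hs : x s = true) (hs₁ : x (s + 1) = true)
    (hpat : ∀ r, s + 1 < r → r < p + w.length → (x r = true ↔ (r - s) % 2 = 1)) :
    rightUnstable w := by
  refine rightUnstable_of_getD (j := (s - p).toNat) (by omega) ?_ ?_ fun r hr hrL => ?_
  · rwa [← mem_cyl_apply hx hps (by omega)]
  · rwa [show (s - p).toNat + 1 = (s + 1 - p).toNat by omega, ← mem_cyl_apply hx (by omega) hsL]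
  · rw [← hx r hrL, hpat _ (by omega) (by omega)]
    omega

/-! ### Reflection -/

theorem getD_reverse {w : List Bool} {j : ℕ} (h : j < w.length) :
    w.reverse.getD j false = w.getD (w.length - 1 - j) false := by
  rw [List.getD_eq_getElem _ _ (by simpa using h), List.getD_eq_getElem _ _ (by omega),
    List.getElem_reverse]

theorem Alternating.of_reverse {w : List Bool} (hw : Alternating w.reverse) : Alternating w := by
  intro s hs
  have := hw (w.length - 2 - s) (by rw [List.length_reverse]; omega)
  rw [getD_reverse (by omega), getD_reverse (by omega),
    show w.length - 1 - (w.length - 2 - s + 1) = s by omega,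
    show w.length - 1 - (w.length - 2 - s) = s + 1 by omega] at this
  rw [this, Bool.not_not]

theorem reverse_flatten_replicate_pair (n : ℕ) (a b : Bool) :
    (List.replicate n [a, b]).flatten.reverse = (List.replicate n [b, a]).flatten := by
  induction n with
  | zero => rfl
  | succ n ih =>
    conv_lhs => rw [List.replicate_succ', List.flatten_append]
    simp [ih, List.replicate_succ]

theorem leftUnstable_of_rightUnstable_reverse {w : List Bool} (h : rightUnstable w.reverse) :
    leftUnstable w := by
  obtain ⟨z, s, n, hz, heq⟩ := h
  refine ⟨z.reverse, s.reverse, n, by rcases hz with rfl | rfl <;> simp, ?_⟩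
  rw [← List.reverse_reverse w, heq]
  simp [reverse_flatten_replicate_pair]

theorem getD_f18W_reverse {w : List Bool} {i : ℕ} (h : i + 2 < w.length) :
    (f18W w.reverse).getD i false = (f18W w).getD (w.length - 3 - i) false := by
  rw [f18W_getD (by simpa using h), f18W_getD (by omega), getD_reverse (by omega),
    getD_reverse (by omega), getD_reverse (by omega), rule18_comm]
  congr 2 <;> omega

theorem f18W_reverse (w : List Bool) : f18W w.reverse = (f18W w).reverse := by
  apply List.ext_getElem (by simp [f18W_length])
  intro i h₁ h₂
  simp only [f18W_length, List.length_reverse] at h₁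
  rw [← List.getD_eq_getElem _ false, ← List.getD_eq_getElem _ false,
    getD_reverse (by rw [f18W_length]; omega), getD_f18W_reverse (by omega), f18W_length,
    show w.length - 2 - 1 - i = w.length - 3 - i by omega]

def revC (x : ℤ → Bool) : ℤ → Bool := fun i => x (-i)

theorem f18C_revC (x : ℤ → Bool) : f18C (revC x) = revC (f18C x) := by
  funext i
  rw [revC, f18C_apply, f18C_apply, rule18_comm]
  simp only [revC, neg_sub, neg_add']
  congr 2
  ring

theorem isKink_revC {x : ℤ → Bool} {a b : ℤ} :
    IsKink (revC x) a b ↔ IsKink x (-b) (-a) := by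
  constructor
  · rintro ⟨h₁, h₂, h₃, h₄, h₅⟩
    refine ⟨by omega, by omega, h₄, h₃, fun t ht ht' => ?_⟩
    simpa [revC] using h₅ (-t) (by omega) (by omega)
  · rintro ⟨h₁, h₂, h₃, h₄, h₅⟩
    exact ⟨by omega, by omega, by simpa [revC] using h₄, by simpa [revC] using h₃,
      fun t ht ht' => h₅ (-t) (by omega) (by omega)⟩

theorem revC_mem_cyl {x : ℤ → Bool} {w : List Bool} {p : ℤ} (hx : x ∈ cyl w p) :
    revC x ∈ cyl w.reverse (-(p + w.length - 1)) := by
  intro j hj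
  rw [List.length_reverse] at hj
  rw [getD_reverse hj, revC, ← hx _ (by omega)]
  congr 1
  omega

theorem KinksIn.revC {x : ℤ → Bool} {lo hi : ℤ} (hk : KinksIn x lo hi) :
    KinksIn (revC x) (1 - hi) (1 - lo) := by
  intro a b hab
  have := hk _ _ (isKink_revC.1 hab)
  omega

theorem IsKink.le_left {x : ℤ → Bool} {a b t₀ : ℤ} (hab : IsKink x a b)
    (ht₀ : x t₀ = true)
    (hpar : ∀ t, t ≤ t₀ → x t = true → (t₀ - t) % 2 = 0) : t₀ ≤ a := by
  have := (isKink_revC (x := x) (a := -b) (b := -a)).2 (by simpa using hab)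
  have := this.right_le (t₀ := -t₀) (by simpa [revC] using ht₀) fun t ht hxt => by
    have := hpar (-t) (by omega) (by simpa [revC] using hxt)
    omega
  omega

/-! ### The image of an extension -/

theorem f18C_ones_propagate {x : ℤ → Bool} {t b : ℤ} (ht : x t = true) (htb : t < b)
    (hy : ∀ s, t < s → s < b → f18C x s = false) : x (b - 1) = true ∨ x b = true := by
  induction hd : (b - t).toNat using Nat.strong_induction_on generalizing t with
  | _ d ih =>
  by_cases hbt : t = b - 1
  · exact .inl (hbt ▸ ht)
  have hy1 := hy (t + 1) (by omega) (by omega)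
  rw [f18C_apply, add_sub_cancel_right, ht] at hy1
  cases h1 : x (t + 1)
  · cases h2 : x (t + 1 + 1)
    · simp [h1, h2, rule18] at hy1
    · by_cases hb2 : t + 1 + 1 = b
      · exact .inr (hb2 ▸ h2)
      · exact ih _ (by omega) h2 (by omega) (fun s h h' => hy s (by omega) h') rfl
  · exact ih _ (by omega) h1 (by omega) (fun s h h' => hy s (by omega) h') rfl

theorem exists_adjacent_ones_of_f18C_eq_false {x : ℤ → Bool} {a t : ℤ} (ha : x a = false)
    (ht : x t = true) (hat : a < t) (hpar : (t - a) % 2 = 0)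
    (hy : ∀ s, a < s → s < t → f18C x s = false) :
    ∃ s, a < s ∧ s < t ∧ (t - s) % 2 = 1 ∧ x s = true ∧
      ∀ r, s < r → r ≤ t → (x r = true ↔ (t - r) % 2 = 0) := by
  induction hd : (t - a).toNat using Nat.strong_induction_on generalizing t with
  | _ d ih =>
  have hy1 := hy (t - 1) (by omega) (by omega)
  rw [f18C_apply, sub_add_cancel, ht] at hy1
  cases h1 : x (t - 1)
  · have h2 : x (t - 1 - 1) = true := by
      cases h2 : x (t - 1 - 1) <;> simp_all [rule18]
    have hne : t - 1 - 1 ≠ a := fun h => by simp [h, ha] at h2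
    obtain ⟨s, has, hst, hts, hs, hpat⟩ := ih _ (by omega) h2 (by omega) (by omega)
      (fun s h h' => hy s h (by omega)) rfl
    refine ⟨s, has, by omega, by omega, hs, fun r hr hrt => ?_⟩
    rcases (show r ≤ t - 1 - 1 ∨ r = t - 1 ∨ r = t by omega) with hr' | rfl | rfl
    · rw [hpat r hr hr']
      omega
    · simp only [h1, Bool.false_eq_true, false_iff]
      omega
    · simp [ht]
  · refine ⟨t - 1, by omega, by omega, by omega, h1, fun r hr hrt => ?_⟩
    obtain rfl : r = t := by omega
    simp [ht]

theorem IsKink.widen_of_f18C {x : ℤ → Bool} {a b : ℤ} (hab : IsKink (f18C x) a b)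
    (hb₁ : x (b + 1) = true) : IsKink x (a - 1) (b + 1) := by
  obtain ⟨hab, hpar, hya, hyb, hgap⟩ := hab
  rw [f18C_apply, rule18_eq_true_iff] at hya hyb
  have hzero : ∀ t, a < t → t < b → x t = false := by
    intro t h h'
    by_contra ht
    rcases f18C_ones_propagate (by simpa using ht) h' fun s hs hs' => hgap s (by omega) hs'
      with h | h <;> simp_all
  have ha₁ : x (a + 1) = false := by
    rcases (show a + 1 = b ∨ a + 1 < b by omega) with h | h
    · exact h ▸ hyb.1
    · exact hzero _ (by omega) h
  refine ⟨by omega, by omega, by simpa [ha₁] using hya.2, hb₁, fun t h h' => ?_⟩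
  rcases (show t = a ∨ t = b ∨ (a < t ∧ t < b) by omega) with rfl | rfl | ⟨h₁, h₂⟩
  exacts [hya.1, hyb.1, hzero t h₁ h₂]

theorem IsKink.exists_adjacent_ones_of_f18C {x : ℤ → Bool} {a b : ℤ}
    (hab : IsKink (f18C x) a b) (hb₁ : x (b + 1) = false) :
    ∃ s, a < s ∧ s + 1 < b ∧ x s = true ∧ x (s + 1) = true ∧
      ∀ r, s + 1 < r → r ≤ b → (x r = true ↔ (r - s) % 2 = 1) := by
  obtain ⟨hab, hpar, hya, hyb, hgap⟩ := hab
  rw [f18C_apply, rule18_eq_true_iff] at hya hyb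
  have hb₁' : x (b - 1) = true := by simpa [hb₁] using hyb.2
  have hab' : a < b - 1 := by
    by_contra
    obtain rfl : a = b - 1 := by omega
    simp [hya.1] at hb₁'
  obtain ⟨s, has, hsb, hbs, hs, hpat⟩ := exists_adjacent_ones_of_f18C_eq_false hya.1 hb₁' hab'
    (by omega) fun s h h' => hgap s h (by omega)
  refine ⟨s, has, by omega, hs, (hpat (s + 1) (by omega) (by omega)).2 (by omega),
    fun r hr hrb => ?_⟩
  rcases (show r ≤ b - 1 ∨ r = b by omega) with hr' | rfl
  · rw [hpat r (by omega) hr']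
    omega
  · simp only [hyb.1, Bool.false_eq_true, false_iff]
    omega

theorem IsKink.f18C_right_lt {x : ℤ → Bool} {w : List Bool} {p a b : ℤ} (hx : x ∈ cyl w p)
    (hk : KinksIn x p (p + w.length)) (hR : ¬ rightUnstable w) (hab : IsKink (f18C x) a b) :
    b < p + w.length - 1 := by
  by_contra! hb
  cases hb₁ : x (b + 1)
  · obtain ⟨s, -, hsb, hs, hs₁, hpat⟩ := hab.exists_adjacent_ones_of_f18C hb₁
    obtain ⟨hps, hsL⟩ :=
      hk s (s + 1) ⟨by omega, by omega, hs, hs₁, fun t h h' => by omega⟩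
    exact hR (rightUnstable_of_mem_cyl hx hps hsL hs hs₁ fun r hr hrL => hpat r hr (by omega))
  · have := (hk _ _ (hab.widen_of_f18C hb₁)).2
    omega

theorem IsKink.f18C_left_lt {x : ℤ → Bool} {w : List Bool} {p a b : ℤ} (hx : x ∈ cyl w p)
    (hk : KinksIn x p (p + w.length)) (hL : ¬ leftUnstable w) (hab : IsKink (f18C x) a b) :
    p < a := by
  have hk' : KinksIn (revC x) (-(p + w.length - 1)) (-(p + w.length - 1) + w.reverse.length) := by
    rw [List.length_reverse, show -(p + w.length - 1) + w.length = 1 - p by ring,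
      show -(p + w.length - 1) = 1 - (p + w.length) by ring]
    exact hk.revC
  have := IsKink.f18C_right_lt (a := -b) (b := -a) (revC_mem_cyl hx) hk'
    (fun h => hL (leftUnstable_of_rightUnstable_reverse h))
    (by rwa [f18C_revC, isKink_revC, neg_neg, neg_neg])
  simp only [List.length_reverse] at this
  omega

theorem KinksIn.f18C {x : ℤ → Bool} {w : List Bool} {p : ℤ} (hx : x ∈ cyl w p)
    (hk : KinksIn x p (p + w.length)) (hw : stable w) :
    KinksIn (f18C x) (p + 1) (p + w.length - 1) := fun _ _ hab =>
  ⟨hab.f18C_left_lt hx hk fun h => hw (.inl h), hab.f18C_right_lt hx hk fun h => hw (.inr h)⟩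

theorem image_extC_subset {w : List Bool} (hlen : 2 ≤ w.length) (hw : stable w) (p : ℤ) :
    f18C '' extC w p ⊆ extC (f18W w) (p + 1) := by
  rintro _ ⟨x, hxE, rfl⟩
  have hx : x ∈ cyl w p := hxE.1
  rw [mem_extC_iff (f18C_mem_cyl hx), f18W_length, Nat.cast_sub hlen]
  convert ((mem_extC_iff hx).1 hxE).f18C hx hw using 2
  push_cast
  ring

/-! ### Preimages -/

theorem exists_greatest_lt {P : ℕ → Prop} [DecidablePred P] {n : ℕ} (h : ∃ i < n, P i) :
    ∃ i < n, P i ∧ ∀ j, i < j → j < n → ¬ P j := by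
  obtain ⟨i, hi, hP⟩ := h
  refine ⟨Nat.findGreatest P (n - 1), ?_, Nat.findGreatest_spec (m := i) (by omega) hP,
    fun j hj hjn => Nat.findGreatest_is_greatest hj (by omega)⟩
  have := Nat.findGreatest_le (P := P) (n - 1)
  omega

theorem exists_anchor_of_le {w : List Bool} (hR : ¬ rightUnstable w) (hA : ¬ Alternating w)
    {lam : ℕ} (hlam : lam < w.length) (hw : w.getD lam false = true)
    (hlast : ∀ s, lam < s → s < w.length → w.getD s false = false)
    (hz : w.length ≤ lam + 2) :
    ∃ q, q + 2 < w.length ∧ (f18W w).getD q false = true ∧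
      ∀ s, q ≤ s → (f18W w).getD s false = true → s % 2 = lam % 2 := by
  -- `m` is the last position where `w` leaves the alternating pattern that ends at `lam`.
  have hdev : ∃ m < w.length, w.getD m false ≠ decide (m % 2 = lam % 2) := by
    by_contra! hno
    refine hA fun s hs => ?_
    rw [hno s (by omega), hno (s + 1) hs]
    by_cases h : s % 2 = lam % 2 <;> simp [h] <;> omega
  obtain ⟨m, hmL, hm, hgt⟩ := exists_greatest_lt hdev
  simp only [ne_eq, not_not] at hgt
  have hmlam : m < lam := by
    by_contra!
    rcases (show m = lam ∨ m = lam + 1 by omega) with rfl | rfl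
    · rw [hw] at hm
      simp at hm
    · rw [hlast _ (by omega) hmL] at hm
      simp only [ne_eq, false_eq_decide_iff, Decidable.not_not] at hm
      omega
  by_cases hmpar : m % 2 = lam % 2
  · have hm₀ : w.getD m false = false := by simpa [hmpar] using hm
    refine ⟨m, by omega, ?_, fun s hs hfs => ?_⟩
    · rw [f18W_getD (by omega), hm₀, hgt (m + 1) (by omega) (by omega),
        hgt (m + 2) (by omega) (by omega), decide_eq_false (by omega : ¬ _),
        decide_eq_true (by omega : _)]
      rfl
    · obtain ⟨hsL, -, hne⟩ := getD_f18W_eq_true hfs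
      rcases hs.lt_or_eq with hs | rfl
      · rw [hgt s hs (by omega), hgt (s + 2) (by omega) hsL] at hne
        simp at hne
      · exact hmpar
  · have hm₁ : w.getD m false = true := by simpa [hmpar] using hm
    refine absurd (rightUnstable_of_getD (j := m) (by omega) hm₁ ?_ fun s hs hsL => ?_) hR
    · rw [hgt _ (by omega) (by omega), decide_eq_true_eq]
      omega
    · rw [hgt s (by omega) hsL, decide_eq_true_eq]
      omega

/-- With `lam` the last one of `w`, the one of `f18W w` at `q` fixes the phase of a preimage
to the right of the window. -/
theorem exists_anchor {w : List Bool} (hR : ¬ rightUnstable w) (hA : ¬ Alternating w)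
    {lam : ℕ} (hlam : lam < w.length) (hw : w.getD lam false = true)
    (hlast : ∀ s, lam < s → s < w.length → w.getD s false = false) :
    ∃ q, q + 2 < w.length ∧ (f18W w).getD q false = true ∧
      ∀ s, q ≤ s → (f18W w).getD s false = true → s % 2 = lam % 2 := by
  by_cases hz : lam + 2 < w.length
  · refine ⟨lam, hz, ?_, fun s hs hfs => ?_⟩
    · rw [f18W_getD hz, hw, hlast _ (by omega) (by omega), hlast _ (by omega) (by omega)]
      rfl
    · obtain ⟨hsL, -, hne⟩ := getD_f18W_eq_true hfs
      rw [hlast (s + 2) (by omega) hsL] at hne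
      rcases hs.lt_or_eq with hs | rfl
      · rw [hlast s hs (by omega)] at hne
        exact absurd rfl hne
      · rfl
  · exact exists_anchor_of_le hR hA hlam hw hlast (by omega)

theorem right_phase_of_last_one {w : List Bool} {p : ℤ} {y : ℤ → Bool}
    (hR : ¬ rightUnstable w) (hA : ¬ Alternating w) {lam : ℕ} (hlam : lam < w.length)
    (hw : w.getD lam false = true)
    (hlast : ∀ s, lam < s → s < w.length → w.getD s false = false)
    (hy : y ∈ cyl (f18W w) (p + 1)) (hk : KinksIn y (p + 1) (p + w.length - 1)) :
    (∀ s : ℕ, w.length ≤ s + 2 → s < w.length → (p + s - (p + lam)) % 2 = 1 →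
      w.getD s false = false) ∧
    ∀ j, p + w.length - 1 ≤ j → (j - (p + lam)) % 2 = 0 → y j = false := by
  constructor
  · intro s hs hsL hpar
    rcases lt_or_ge lam s with h | h
    · exact hlast s h hsL
    · by_contra hs₁
      refine hR (rightUnstable_of_getD (j := s) (by omega) (by simpa using hs₁) ?_
        fun r h h' => by omega)
      rwa [show s + 1 = lam by omega]
  · obtain ⟨q, hqL, hq, hqpar⟩ := exists_anchor hR hA hlam hw hlast
    have hyq : y (p + 1 + q) = true := by
      rwa [mem_cyl_apply hy (by omega) (by rw [f18W_length]; omega),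
        show (p + 1 + q - (p + 1)).toNat = q by omega]
    have hpar := ones_parity_of_kinks_lt hyq (fun a b hab => (hk a b hab).2) fun j hj hjL hyj => by
      rw [mem_cyl_apply hy (by omega) (by rw [f18W_length]; omega)] at hyj
      have := hqpar _ (by omega) hyj
      have := hqpar q le_rfl hq
      omega
    intro j hj hjpar
    by_contra hyj
    have := hpar j (by omega) (by simpa using hyj)
    have := hqpar q le_rfl hq
    omega

theorem left_phase_of_first_one {w : List Bool} {p : ℤ} {y : ℤ → Bool} (hlen : 2 ≤ w.length)
    (hL : ¬ leftUnstable w) (hA : ¬ Alternating w) {mu : ℕ} (hmu : mu < w.length)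
    (hw : w.getD mu false = true) (hfirst : ∀ s < mu, w.getD s false = false)
    (hy : y ∈ cyl (f18W w) (p + 1)) (hk : KinksIn y (p + 1) (p + w.length - 1)) :
    (∀ s : ℕ, s < 2 → (p + s - (p + mu)) % 2 = 1 → w.getD s false = false) ∧
    ∀ j, j ≤ p → (j - (p + mu)) % 2 = 0 → y j = false := by
  have hy' : revC y ∈ cyl (f18W w.reverse) (-(p + w.length - 1) + 1) := by
    have := revC_mem_cyl hy
    rw [← f18W_reverse, f18W_length] at this
    convert this using 2
    omega
  have hk' : KinksIn (revC y) (-(p + w.length - 1) + 1)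
      (-(p + w.length - 1) + w.reverse.length - 1) := by
    rw [List.length_reverse]
    convert hk.revC using 1 <;> ring
  have hrev : ∀ s < w.length, w.reverse.getD (w.length - 1 - s) false = w.getD s false :=
    fun s hs => by rw [getD_reverse (by omega), show w.length - 1 - (w.length - 1 - s) = s by omega]
  have hlast : ∀ s, w.length - 1 - mu < s → s < w.reverse.length →
      w.reverse.getD s false = false := by
    intro s hs hsL
    rw [List.length_reverse] at hsL
    obtain ⟨t, rfl⟩ : ∃ t, s = w.length - 1 - t := ⟨w.length - 1 - s, by omega⟩
    rw [hrev t (by omega)]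
    exact hfirst t (by omega)
  obtain ⟨hw', hy''⟩ := right_phase_of_last_one (p := -(p + w.length - 1))
    (fun h => hL (leftUnstable_of_rightUnstable_reverse h)) (fun h => hA h.of_reverse)
    (by rw [List.length_reverse]; omega) (by rwa [hrev mu hmu]) hlast hy' hk'
  constructor
  · intro s hs hpar
    rw [← hrev s (by omega)]
    exact hw' _ (by rw [List.length_reverse]; omega) (by rw [List.length_reverse]; omega)
      (by omega)
  · intro j hj hpar
    simpa [revC] using hy'' (-j) (by rw [List.length_reverse]; omega) (by omega)

def xorSeq (u v : Bool) (z : ℕ → Bool) : ℕ → Bool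
  | 0 => u
  | 1 => v
  | k + 2 => xor (xorSeq u v z k) (z (k + 1))

theorem exists_right_extension (x₀ y : ℤ → Bool) {m c : ℤ}
    (hx₀ : ∀ t, m - 2 ≤ t → t < m → (t - c) % 2 = 1 → x₀ t = false)
    (hy : ∀ j, m - 1 ≤ j → (j - c) % 2 = 0 → y j = false) :
    ∃ g : ℤ → Bool, (∀ t < m, g t = x₀ t) ∧ (∀ j, m - 1 ≤ j → f18C g j = y j) ∧
      ∀ t, m - 2 ≤ t → (t - c) % 2 = 1 → g t = false := by
  let g : ℤ → Bool := fun t => if t < m - 2 then x₀ t else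
    xorSeq (x₀ (m - 2)) (x₀ (m - 1)) (fun k => y (m - 2 + k)) (t - (m - 2)).toNat
  have hg : ∀ t < m, g t = x₀ t := by
    intro t ht
    simp only [g]
    split_ifs with h
    · rfl
    · rcases (show t = m - 2 ∨ t = m - 1 by omega) with rfl | rfl
      · rw [sub_self, Int.toNat_zero, xorSeq]
      · rw [show (m - 1 - (m - 2)).toNat = 1 by omega, xorSeq]
  have hrec : ∀ t, m ≤ t → g t = xor (g (t - 2)) (y (t - 1)) := by
    intro t ht
    simp only [g, if_neg (show ¬ t < m - 2 by omega), if_neg (show ¬ t - 2 < m - 2 by omega)]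
    rw [show (t - (m - 2)).toNat = (t - 2 - (m - 2)).toNat + 2 by omega, xorSeq]
    congr 2
    omega
  have hzero : ∀ t, m - 2 ≤ t → (t - c) % 2 = 1 → g t = false := by
    intro t ht hpar
    induction hd : (t - (m - 2)).toNat using Nat.strong_induction_on generalizing t with
    | _ d ih =>
    by_cases htm : t < m
    · rw [hg t htm]
      exact hx₀ t ht htm hpar
    · rw [hrec t (by omega), ih _ (by omega) (t - 2) (by omega) (by omega) rfl,
        hy (t - 1) (by omega) (by omega)]
      rfl
  refine ⟨g, hg, fun j hj => ?_, hzero⟩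
  rw [f18C_apply]
  rcases Int.emod_two_eq_zero_or_one (j - c) with hpar | hpar
  · rw [hzero (j - 1) (by omega) (by omega), hzero (j + 1) (by omega) (by omega), hy j hj hpar]
    cases g j <;> rfl
  · rw [hzero j (by omega) hpar, rule18_false_middle, hrec (j + 1) (by omega),
      add_sub_cancel_right, show j + 1 - 2 = j - 1 by ring]
    cases g (j - 1) <;> cases y j <;> rfl

theorem exists_left_extension (x₀ y : ℤ → Bool) {m c : ℤ}
    (hx₀ : ∀ t, m < t → t ≤ m + 2 → (t - c) % 2 = 1 → x₀ t = false)
    (hy : ∀ j, j ≤ m + 1 → (j - c) % 2 = 0 → y j = false) :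
    ∃ g : ℤ → Bool, (∀ t, m < t → g t = x₀ t) ∧
      (∀ j, j ≤ m + 1 → f18C g j = y j) ∧
      ∀ t, t ≤ m + 2 → (t - c) % 2 = 1 → g t = false := by
  obtain ⟨g, hg, hf, hz⟩ := exists_right_extension (revC x₀) (revC y) (m := -m) (c := -c)
    (fun t h h' _ => hx₀ (-t) (by omega) (by omega) (by omega))
    (fun j h _ => hy (-j) (by omega) (by omega))
  refine ⟨revC g, fun t ht => by simpa [revC] using hg (-t) (by omega), fun j hj => ?_,
    fun t ht _ => hz (-t) (by omega) (by omega)⟩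
  rw [f18C_revC]
  simpa [revC] using hf (-j) (by omega)

theorem exists_preimage_of_phases {w : List Bool} {p : ℤ} {y : ℤ → Bool}
    (hlen : 3 ≤ w.length)
    (hy : y ∈ cyl (f18W w) (p + 1)) {cL cR : ℤ}
    (hwL : ∀ s : ℕ, s < 2 → (p + s - cL) % 2 = 1 → w.getD s false = false)
    (hyL : ∀ j, j ≤ p → (j - cL) % 2 = 0 → y j = false)
    (hwR : ∀ s : ℕ, w.length ≤ s + 2 → s < w.length → (p + s - cR) % 2 = 1 →
      w.getD s false = false)
    (hyR : ∀ j, p + w.length - 1 ≤ j → (j - cR) % 2 = 0 → y j = false) :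
    ∃ x ∈ cyl w p, f18C x = y ∧ (∀ t, t ≤ p + 1 → (t - cL) % 2 = 1 → x t = false) ∧
      ∀ t, p + w.length - 2 ≤ t → (t - cR) % 2 = 1 → x t = false := by
  set x₀ : ℤ → Bool := fun t => w.getD (t - p).toNat false
  have hx₀ : x₀ ∈ cyl w p := fun j _ => by simp [x₀]
  obtain ⟨gL, hgL, hfL, hzL⟩ := exists_left_extension x₀ y (m := p - 1) (c := cL)
    (fun t h h' hp => hwL _ (by omega) (by omega)) (fun j hj hp => hyL j (by omega) hp)
  obtain ⟨gR, hgR, hfR, hzR⟩ := exists_right_extension x₀ y (m := p + w.length) (c := cR)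
    (fun t h h' hp => hwR _ (by omega) (by omega) (by omega))
    (fun j hj hp => hyR j (by omega) hp)
  set x : ℤ → Bool := fun t => if t < p then gL t else gR t
  have hxL : ∀ t ≤ p + 1, x t = gL t := by
    intro t ht
    simp only [x]
    split_ifs with h
    · rfl
    · rw [hgR t (by omega), hgL t (by omega)]
  have hxR : ∀ t, p ≤ t → x t = gR t := fun t ht => if_neg (by omega)
  refine ⟨x, fun j hj => ?_, funext fun j => ?_, fun t ht hp => ?_, fun t ht hp => ?_⟩
  · rw [hxR _ (by omega), hgR _ (by omega)]
    simp [x₀]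
  · by_cases hj : j ≤ p
    · rw [f18C_congr (x' := gL) fun t _ h => hxL t (by omega), hfL j (by omega)]
    rw [f18C_congr (x' := gR) fun t h _ => hxR t (by omega)]
    by_cases hj' : p + w.length - 1 ≤ j
    · exact hfR j hj'
    rw [f18C_congr (x' := x₀) fun t _ h => hgR t (by omega),
      mem_cyl_apply (f18C_mem_cyl hx₀) (by omega) (by rw [f18W_length]; omega),
      mem_cyl_apply hy (by omega) (by rw [f18W_length]; omega)]
  · rw [hxL t ht]
    exact hzL t (by omega) hp
  · rw [hxR t (by omega)]
    exact hzR t (by omega) hp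

theorem kinksIn_of_vanishing_outside {x : ℤ → Bool} {w : List Bool} {p : ℤ} {mu lam : ℕ}
    (hx : x ∈ cyl w p) (hmu : mu < w.length) (hwmu : w.getD mu false = true)
    (hfirst : ∀ s < mu, w.getD s false = false) (hlam : lam < w.length)
    (hwlam : w.getD lam false = true)
    (hlast : ∀ s, lam < s → s < w.length → w.getD s false = false)
    (hxL : ∀ t, t ≤ p + 1 → (t - (p + mu)) % 2 = 1 → x t = false)
    (hxR : ∀ t, p + w.length - 2 ≤ t → (t - (p + lam)) % 2 = 1 → x t = false) :
    KinksIn x p (p + w.length) := by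
  intro a b hab
  constructor
  · refine le_trans (by omega) (hab.le_left (t₀ := p + mu) ?_ fun t ht hxt => ?_)
    · rwa [mem_cyl_apply hx (by omega) (by omega), show (p + mu - p).toNat = mu by omega]
    by_contra hpar
    by_cases htp : t ≤ p + 1
    · simp [hxL t htp (by omega)] at hxt
    · rw [mem_cyl_apply hx (by omega) (by omega)] at hxt
      rcases (show (t - p).toNat < mu ∨ t = p + mu by omega) with h | rfl
      · rw [hfirst _ h] at hxt
        contradiction
      · omega
  · refine lt_of_le_of_lt (hab.right_le (t₀ := p + lam) ?_ fun t ht hxt => ?_) (by omega)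
    · rwa [mem_cyl_apply hx (by omega) (by omega), show (p + lam - p).toNat = lam by omega]
    by_contra hpar
    by_cases htp : p + w.length - 2 ≤ t
    · simp [hxR t htp (by omega)] at hxt
    · rw [mem_cyl_apply hx (by omega) (by omega)] at hxt
      rcases (show lam < (t - p).toNat ∨ t = p + lam by omega) with h | rfl
      · rw [hlast _ h (by omega)] at hxt
        contradiction
      · omega

theorem exists_preimage_of_exists_eq_true {w : List Bool} {p : ℤ} {y : ℤ → Bool}
    (hlen : 3 ≤ w.length) (hw : stable w) (hA : ¬ Alternating w)
    (hone : ∃ i < w.length, w.getD i false = true)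
    (hy : y ∈ cyl (f18W w) (p + 1)) (hk : KinksIn y (p + 1) (p + w.length - 1)) :
    ∃ x ∈ cyl w p, f18C x = y ∧ KinksIn x p (p + w.length) := by
  obtain ⟨lam, hlamL, hlam, hlast⟩ := exists_greatest_lt hone
  simp only [Bool.not_eq_true] at hlast
  obtain ⟨mu, hmuL, hmu, hfirst⟩ : ∃ mu < w.length, w.getD mu false = true ∧
      ∀ s < mu, w.getD s false = false := by
    refine ⟨Nat.find hone, (Nat.find_spec hone).1, (Nat.find_spec hone).2, fun s hs => ?_⟩
    have := Nat.find_min hone hs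
    simp only [not_and, Bool.not_eq_true] at this
    exact this (hs.trans (Nat.find_spec hone).1)
  obtain ⟨hwR, hyR⟩ := right_phase_of_last_one (fun h => hw (.inr h)) hA hlamL hlam hlast hy hk
  obtain ⟨hwL, hyL⟩ :=
    left_phase_of_first_one (by omega) (fun h => hw (.inl h)) hA hmuL hmu hfirst hy hk
  obtain ⟨x, hx, hfx, hxL, hxR⟩ := exists_preimage_of_phases hlen hy hwL hyL hwR hyR
  exact ⟨x, hx, hfx,
    kinksIn_of_vanishing_outside hx hmuL hmu hfirst hlamL hlam hlast hxL hxR⟩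

theorem exists_preimage_of_forall_eq_false {w : List Bool} {p : ℤ} {y : ℤ → Bool}
    (hlen : 3 ≤ w.length) (hw : ∀ i < w.length, w.getD i false = false)
    (hy : y ∈ cyl (f18W w) (p + 1)) (hk : KinksIn y (p + 1) (p + w.length - 1)) :
    ∃ x ∈ cyl w p, f18C x = y ∧ KinksIn x p (p + w.length) := by
  obtain ⟨c, hc⟩ := exists_parity_of_forall_not_isKink fun a b hab => by
    obtain ⟨ha, hb⟩ := hk a b hab
    have := hab.1
    have hya := hab.2.2.1
    rw [mem_cyl_apply hy ha (by rw [f18W_length]; omega), f18W_getD (by omega), hw _ (by omega),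
      hw _ (by omega), hw _ (by omega)] at hya
    contradiction
  obtain ⟨x, hx, hfx, hxL, hxR⟩ := exists_preimage_of_phases hlen hy (cL := c) (cR := c)
    (fun s hs _ => hw s (by omega)) (fun j _ => hc j) (fun s _ hs _ => hw s hs) (fun j _ => hc j)
  refine ⟨x, hx, hfx, fun a b hab => absurd hab (not_isKink_of_parity (c := c) ?_ a b)⟩
  intro t ht
  rcases (show t ≤ p + 1 ∨ p + w.length - 2 ≤ t ∨ (p ≤ t ∧ t < p + w.length) by omega)
    with h | h | ⟨h, h'⟩
  · exact hxL t h ht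
  · exact hxR t h ht
  · rw [mem_cyl_apply hx h h']
    exact hw _ (by omega)

theorem extC_subset_image {w : List Bool} (hlen : 3 ≤ w.length) (hw : stable w)
    (hsp : ¬ specialForm w) (p : ℤ) : extC (f18W w) (p + 1) ⊆ f18C '' extC w p := by
  intro y hyE
  have hy : y ∈ cyl (f18W w) (p + 1) := hyE.1
  have hk : KinksIn y (p + 1) (p + w.length - 1) := by
    have := (mem_extC_iff hy).1 hyE
    rwa [f18W_length, Nat.cast_sub (by omega), show p + 1 + (w.length - (2 : ℕ) : ℤ) =
      p + w.length - 1 by push_cast; ring] at this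
  obtain ⟨x, hx, hfx, hkx⟩ : ∃ x ∈ cyl w p, f18C x = y ∧ KinksIn x p (p + w.length) := by
    by_cases hone : ∃ i < w.length, w.getD i false = true
    · exact exists_preimage_of_exists_eq_true hlen hw
        (fun h => hsp (specialForm_of_alternating h)) hone hy hk
    · push Not at hone
      exact exists_preimage_of_forall_eq_false hlen (by simpa using hone) hy hk
  exact ⟨x, (mem_extC_iff hx).2 hkx, hfx⟩

/-- For a stable word `w`, `f(Σ̃(w,p)) ⊆ Σ̃(f(w), p+1)`, with equality when `w` is
not of the form `0^α (10)^n 1^β`. -/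
theorem f18C_extC (w : List Bool) (hlen : 3 ≤ w.length) (hw : stable w) (p : ℤ) :
    f18C '' extC w p ⊆ extC (f18W w) (p + 1) ∧
    (¬ specialForm w → f18C '' extC w p = extC (f18W w) (p + 1)) :=
  ⟨image_extC_subset (by omega) hw p, fun hsp =>
    (image_extC_subset (by omega) hw p).antisymm (extC_subset_image hlen hw hsp p)⟩
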